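/- Let d, n ≥ 1, ω ∈ ℝ^d, ρ > 0 and m > d+2, and let J be an n×n matrix in Jordan normal form whose diagonal entries are real and nonzero. Let μ > 0 and let 0 < σ ≤ σ₀ with σ₀ sufficiently small (so that L_ε(a) = (−εa² + ia) I_n + ε J is invertible with ‖L_ε(a)^{-1}‖ ≤ Cσ^{-1} for all ε ∈ Ω(σ,μ), a ∈ ℝ). Suppose ε ↦ V_ε is a bounded, complex differentiable map from the interior of Ω(σ,μ) to H^{ρ,m}(𝕋^d, ℂ^n). Then the map ε ↦ ε𝓛_ε^{-1}V_ε, where (𝓛_ε^{-1}V)̂_k = L_ε(ω·k)^{-1} V̂_k, is complex differentiable from the interior of Ω(σ,μ) to H^{ρ,m}(𝕋^d, ℂ^n). -/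

import Mathlib

open MeasureTheory Complex Filter
open scoped ENNReal

set_option synthInstance.maxHeartbeats 1000000
set_option maxHeartbeats 1000000
set_option linter.deprecated false
set_option linter.unusedVariables false
noncomputable section

/-- `ℂⁿ` with the Euclidean norm. -/
abbrev Ecs (n : ℕ) := EuclideanSpace ℂ (Fin n)

/-- The weighted-`ℓ²` Banach-space model of `H^{ρ,m}(𝕋^d, ℂⁿ)` (in the weighted Fourier
coordinates, the Fourier multiplier `𝓛_ε⁻¹` acts by the same matrices `L_ε(ω·k)⁻¹`). -/
abbrev Xsp (d n : ℕ) := lp (fun _ : Fin d → ℤ => Ecs n) 2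

/-- A matrix is in Jordan normal form: the only nonzero entries are on the diagonal or
the subdiagonal, subdiagonal entries are `0` or `1`, and a subdiagonal `1` forces the two
adjacent diagonal entries to agree. -/
def IsJordanForm {n : ℕ} (J : Matrix (Fin n) (Fin n) ℂ) : Prop :=
  (∀ i j : Fin n, J i j ≠ 0 → i = j ∨ (i : ℕ) = (j : ℕ) + 1) ∧
  (∀ i j : Fin n, (i : ℕ) = (j : ℕ) + 1 → J i j = 0 ∨ (J i j = 1 ∧ J i i = J j j))

/-- The multiplier matrix `L_ε(a) = (-εa² + ia)·I + ε·J`. -/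
def Lmat {n : ℕ} (J : Matrix (Fin n) (Fin n) ℂ) (ε : ℂ) (a : ℝ) : Matrix (Fin n) (Fin n) ℂ :=
  (-ε * (a : ℂ) ^ 2 + Complex.I * (a : ℂ)) • (1 : Matrix (Fin n) (Fin n) ℂ) + ε • J

/-- `ω·k`. -/
def odot {d : ℕ} (ω : Fin d → ℝ) (k : Fin d → ℤ) : ℝ := ∑ j, ω j * (k j : ℝ)

/-- The conical domain `Ω(σ,μ) = {ε ∈ ℂ : Re ε ≥ μ|Im ε|, σ ≤ |ε| ≤ 2σ}`. -/
def ConeDom (σ μ : ℝ) : Set ℂ :=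
  {ε : ℂ | μ * |ε.im| ≤ ε.re ∧ σ ≤ ‖ε‖ ∧ ‖ε‖ ≤ 2 * σ}

variable {α : Type*} {E : α → Type*} [∀ i, NormedAddCommGroup (E i)]

lemma memlp2_of_le {f g : ∀ i, E i} (hf : Memℓp f 2) {c : ℝ} (hc : 0 ≤ c)
    (h : ∀ k, ‖g k‖ ≤ c * ‖f k‖) : Memℓp g 2 := by
  have hp : 0 < (2 : ℝ≥0∞).toReal := by norm_num
  apply memℓp_gen
  have hs : Summable fun i => c ^ (2 : ℝ≥0∞).toReal * ‖f i‖ ^ (2 : ℝ≥0∞).toReal :=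
    (hf.summable hp).mul_left _
  refine hs.of_nonneg_of_le (fun i => Real.rpow_nonneg (norm_nonneg _) _) (fun i => ?_)
  rw [← Real.mul_rpow hc (norm_nonneg _)]
  exact Real.rpow_le_rpow (norm_nonneg _) (h i) (le_of_lt hp)

lemma lp2_norm_le {f g : lp E 2} {c : ℝ} (hc : 0 ≤ c)
    (h : ∀ k, ‖(g : ∀ i, E i) k‖ ≤ c * ‖(f : ∀ i, E i) k‖) : ‖g‖ ≤ c * ‖f‖ := by
  have hp : 0 < (2 : ℝ≥0∞).toReal := by norm_num
  have key : ‖g‖ ^ (2 : ℝ≥0∞).toReal ≤ (c * ‖f‖) ^ (2 : ℝ≥0∞).toReal := by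
    rw [lp.norm_rpow_eq_tsum hp g]
    have h1 : ∀ i, ‖(g : ∀ i, E i) i‖ ^ (2 : ℝ≥0∞).toReal
        ≤ c ^ (2 : ℝ≥0∞).toReal * ‖(f : ∀ i, E i) i‖ ^ (2 : ℝ≥0∞).toReal := by
      intro i
      rw [← Real.mul_rpow hc (norm_nonneg _)]
      exact Real.rpow_le_rpow (norm_nonneg _) (h i) (le_of_lt hp)
    have hs : Summable fun i => c ^ (2 : ℝ≥0∞).toReal * ‖(f : ∀ i, E i) i‖ ^ (2 : ℝ≥0∞).toReal :=
      ((lp.memℓp f).summable hp).mul_left _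
    calc ∑' i, ‖(g : ∀ i, E i) i‖ ^ (2 : ℝ≥0∞).toReal
        ≤ ∑' i, c ^ (2 : ℝ≥0∞).toReal * ‖(f : ∀ i, E i) i‖ ^ (2 : ℝ≥0∞).toReal :=
          Summable.tsum_le_tsum h1 ((lp.memℓp g).summable hp) hs
      _ = c ^ (2 : ℝ≥0∞).toReal * ∑' i, ‖(f : ∀ i, E i) i‖ ^ (2 : ℝ≥0∞).toReal := tsum_mul_left
      _ = c ^ (2 : ℝ≥0∞).toReal * ‖f‖ ^ (2 : ℝ≥0∞).toReal := by
          rw [lp.norm_rpow_eq_tsum hp f]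
      _ = (c * ‖f‖) ^ (2 : ℝ≥0∞).toReal := (Real.mul_rpow hc (norm_nonneg _)).symm
  by_contra hlt
  push_neg at hlt
  have : (c * ‖f‖) ^ (2 : ℝ≥0∞).toReal < ‖g‖ ^ (2 : ℝ≥0∞).toReal :=
    Real.rpow_lt_rpow (by positivity) hlt hp
  linarith

/-- diagonal multiplier operator on `Xsp` -/
def mulLp {d n : ℕ} (T : (Fin d → ℤ) → (Ecs n →L[ℂ] Ecs n)) {c : ℝ} (hc : 0 ≤ c)
    (hT : ∀ k, ‖T k‖ ≤ c) : Xsp d n →L[ℂ] Xsp d n :=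
  LinearMap.mkContinuous
    { toFun := fun f => ⟨fun k => T k ((f : ∀ _, Ecs n) k),
        memlp2_of_le (lp.memℓp f) hc (fun k =>
          ((T k).le_opNorm _).trans (by gcongr; exact hT k))⟩
      map_add' := by
        intro f g
        apply lp.ext
        funext k
        simp only [lp.coeFn_add, Pi.add_apply, map_add]
      map_smul' := by
        intro a f
        apply lp.ext
        funext k
        simp only [lp.coeFn_smul, Pi.smul_apply, _root_.map_smul, RingHom.id_apply] }
    c
    (fun f => lp2_norm_le hc (fun k =>
      ((T k).le_opNorm _).trans (by gcongr; exact hT k)))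

@[simp] lemma mulLp_apply {d n : ℕ} (T : (Fin d → ℤ) → (Ecs n →L[ℂ] Ecs n)) {c : ℝ}
    (hc : 0 ≤ c) (hT : ∀ k, ‖T k‖ ≤ c) (f : Xsp d n) (k : Fin d → ℤ) :
    (mulLp T hc hT f : ∀ _, Ecs n) k = T k ((f : ∀ _, Ecs n) k) := rfl

open scoped Classical

def mulLp' {d n : ℕ} (T : (Fin d → ℤ) → (Ecs n →L[ℂ] Ecs n)) : Xsp d n →L[ℂ] Xsp d n :=
  if h : ∃ c : ℝ, 0 ≤ c ∧ ∀ k, ‖T k‖ ≤ c then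
    mulLp T h.choose_spec.1 h.choose_spec.2 else 0

lemma mulLp'_apply {d n : ℕ} (T : (Fin d → ℤ) → (Ecs n →L[ℂ] Ecs n)) {c : ℝ}
    (hc : 0 ≤ c) (hT : ∀ k, ‖T k‖ ≤ c) (f : Xsp d n) (k : Fin d → ℤ) :
    (mulLp' T f : ∀ _, Ecs n) k = T k ((f : ∀ _, Ecs n) k) := by
  rw [mulLp', dif_pos ⟨c, hc, hT⟩]
  rfl


def nu {n : ℕ} (A : Matrix (Fin n) (Fin n) ℂ) : ℝ :=
  ‖Matrix.toEuclideanCLM (𝕜 := ℂ) A‖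

lemma nu_nonneg {n : ℕ} (A : Matrix (Fin n) (Fin n) ℂ) : 0 ≤ nu A := norm_nonneg _

lemma nu_mul_le {n : ℕ} (A B : Matrix (Fin n) (Fin n) ℂ) : nu (A * B) ≤ nu A * nu B := by
  unfold nu; rw [map_mul]; exact norm_mul_le _ _

lemma nu_smul {n : ℕ} (c : ℂ) (A : Matrix (Fin n) (Fin n) ℂ) : nu (c • A) = ‖c‖ * nu A := by
  unfold nu
  rw [show Matrix.toEuclideanCLM (𝕜 := ℂ) (c • A) = c • Matrix.toEuclideanCLM (𝕜 := ℂ) A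
    from _root_.map_smul _ c A]
  exact norm_smul c (Matrix.toEuclideanCLM (𝕜 := ℂ) A)

lemma nu_add_le {n : ℕ} (A B : Matrix (Fin n) (Fin n) ℂ) : nu (A + B) ≤ nu A + nu B := by
  unfold nu; rw [map_add]; exact norm_add_le _ _

lemma nu_sub_le {n : ℕ} (A B : Matrix (Fin n) (Fin n) ℂ) : nu (A - B) ≤ nu A + nu B := by
  unfold nu; rw [map_sub]; exact norm_sub_le _ _

lemma nu_one_le {n : ℕ} : nu (1 : Matrix (Fin n) (Fin n) ℂ) ≤ 1 := by
  unfold nu; rw [map_one]; exact ContinuousLinearMap.norm_id_le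

/-- Neumann-type bound -/
lemma nu_inv_le_of_decomp {n : ℕ} {u : ℂ} (hu : u ≠ 0)
    {L P : Matrix (Fin n) (Fin n) ℂ} (hL : IsUnit L.det)
    (hd : L = u • ((1 : Matrix (Fin n) (Fin n) ℂ) - P)) (hP : nu P ≤ 1 / 2) :
    nu L⁻¹ ≤ 2 / ‖u‖ := by
  have hdet : IsUnit ((1 : Matrix (Fin n) (Fin n) ℂ) - P).det := by
    have h : L.det = u ^ (Fintype.card (Fin n)) * ((1 : Matrix (Fin n) (Fin n) ℂ) - P).det := by
      rw [hd, Matrix.det_smul]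
    rw [h] at hL
    exact isUnit_of_mul_isUnit_right hL
  set Q := ((1 : Matrix (Fin n) (Fin n) ℂ) - P)⁻¹ with hQdef
  have hQ' : Q * ((1 : Matrix (Fin n) (Fin n) ℂ) - P) = 1 := Matrix.nonsing_inv_mul _ hdet
  have hQ : ((1 : Matrix (Fin n) (Fin n) ℂ) - P) * Q = 1 := Matrix.mul_nonsing_inv _ hdet
  have hid : Q = 1 + P * Q := by
    rw [Matrix.sub_mul, Matrix.one_mul] at hQ
    rw [← hQ]
    abel
  have hnuQ : nu Q ≤ 2 := by
    have h2 : nu Q ≤ 1 + 1 / 2 * nu Q := by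
      calc nu Q = nu (1 + P * Q) := by rw [← hid]
        _ ≤ nu 1 + nu (P * Q) := nu_add_le _ _
        _ ≤ 1 + nu P * nu Q := add_le_add nu_one_le (nu_mul_le _ _)
        _ ≤ 1 + 1 / 2 * nu Q := by
            have := mul_le_mul_of_nonneg_right hP (nu_nonneg Q)
            linarith
    linarith [nu_nonneg Q]
  have hinv : L⁻¹ = u⁻¹ • Q := by
    apply Matrix.inv_eq_left_inv
    rw [hd, Matrix.smul_mul, Matrix.mul_smul, smul_smul, inv_mul_cancel₀ hu, one_smul, hQ']
  rw [hinv, nu_smul, norm_inv]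
  have hun : 0 < ‖u‖ := norm_pos_iff.mpr hu
  rw [div_eq_mul_inv, mul_comm ‖u‖⁻¹ (nu Q)]
  exact mul_le_mul_of_nonneg_right hnuQ (inv_nonneg.mpr (norm_nonneg u))

lemma stepA {n : ℕ} (J : Matrix (Fin n) (Fin n) ℂ) (ε ε₀ : ℂ) (a : ℝ)
    (hε : IsUnit (Lmat J ε a).det) (hε₀ : IsUnit (Lmat J ε₀ a).det) :
    ε • (Lmat J ε a)⁻¹ - ε₀ • (Lmat J ε₀ a)⁻¹
      = (Complex.I * a * (ε - ε₀)) • ((Lmat J ε a)⁻¹ * (Lmat J ε₀ a)⁻¹) := by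
  have hX : (Lmat J ε a)⁻¹ * Lmat J ε a = 1 := Matrix.nonsing_inv_mul _ hε
  have hY : Lmat J ε₀ a * (Lmat J ε₀ a)⁻¹ = 1 := Matrix.mul_nonsing_inv _ hε₀
  have key1 : ε • Lmat J ε₀ a - ε₀ • Lmat J ε a = (Complex.I * a * (ε - ε₀)) • 1 := by
    simp only [Lmat]; module
  have expand : (Lmat J ε a)⁻¹ * (ε • Lmat J ε₀ a - ε₀ • Lmat J ε a) * (Lmat J ε₀ a)⁻¹
      = ε • (Lmat J ε a)⁻¹ - ε₀ • (Lmat J ε₀ a)⁻¹ := by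
    rw [Matrix.mul_sub, Matrix.mul_smul, Matrix.mul_smul, Matrix.sub_mul,
      Matrix.smul_mul, Matrix.smul_mul, Matrix.mul_assoc, hY, Matrix.mul_one, hX,
      Matrix.one_mul]
  rw [← expand, key1, Matrix.mul_smul, Matrix.smul_mul, Matrix.mul_one]

lemma stepB {n : ℕ} (J : Matrix (Fin n) (Fin n) ℂ) (ε ε₀ : ℂ) (a : ℝ)
    (hε : IsUnit (Lmat J ε a).det) (hε₀ : IsUnit (Lmat J ε₀ a).det) :
    (Lmat J ε a)⁻¹ - (Lmat J ε₀ a)⁻¹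
      = (ε - ε₀) • ((Lmat J ε a)⁻¹ * (((a : ℂ) ^ 2) • 1 - J) * (Lmat J ε₀ a)⁻¹) := by
  have hX : (Lmat J ε a)⁻¹ * Lmat J ε a = 1 := Matrix.nonsing_inv_mul _ hε
  have hY : Lmat J ε₀ a * (Lmat J ε₀ a)⁻¹ = 1 := Matrix.mul_nonsing_inv _ hε₀
  have key2 : Lmat J ε₀ a - Lmat J ε a = (ε - ε₀) • (((a : ℂ) ^ 2) • 1 - J) := by
    simp only [Lmat]; module
  have expand : (Lmat J ε a)⁻¹ * (Lmat J ε₀ a - Lmat J ε a) * (Lmat J ε₀ a)⁻¹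
      = (Lmat J ε a)⁻¹ - (Lmat J ε₀ a)⁻¹ := by
    rw [Matrix.mul_sub, Matrix.sub_mul, Matrix.mul_assoc, hY, Matrix.mul_one, hX,
      Matrix.one_mul]
  rw [← expand, key2, Matrix.mul_smul, Matrix.smul_mul]

lemma rem_eq {n : ℕ} (J : Matrix (Fin n) (Fin n) ℂ) (ε ε₀ : ℂ) (a : ℝ)
    (hε : IsUnit (Lmat J ε a).det) (hε₀ : IsUnit (Lmat J ε₀ a).det) :
    ε • (Lmat J ε a)⁻¹ - ε₀ • (Lmat J ε₀ a)⁻¹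
        - (ε - ε₀) • ((Complex.I * a) • ((Lmat J ε₀ a)⁻¹ * (Lmat J ε₀ a)⁻¹))
      = (Complex.I * a * (ε - ε₀) ^ 2) •
          ((Lmat J ε a)⁻¹ * (((a : ℂ) ^ 2) • 1 - J) * (Lmat J ε₀ a)⁻¹ * (Lmat J ε₀ a)⁻¹) := by
  have h1 := stepA J ε ε₀ a hε hε₀
  have h2 := stepB J ε ε₀ a hε hε₀
  have h3 : (Lmat J ε a)⁻¹ * (Lmat J ε₀ a)⁻¹ - (Lmat J ε₀ a)⁻¹ * (Lmat J ε₀ a)⁻¹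
      = (ε - ε₀) • ((Lmat J ε a)⁻¹ * (((a : ℂ) ^ 2) • 1 - J) * (Lmat J ε₀ a)⁻¹
          * (Lmat J ε₀ a)⁻¹) := by
    rw [← Matrix.sub_mul, h2, Matrix.smul_mul]
  rw [h1]
  have h4 : (Complex.I * a * (ε - ε₀)) • ((Lmat J ε a)⁻¹ * (Lmat J ε₀ a)⁻¹)
      - (ε - ε₀) • (Complex.I * a) • ((Lmat J ε₀ a)⁻¹ * (Lmat J ε₀ a)⁻¹)
      = (Complex.I * a * (ε - ε₀)) • ((Lmat J ε a)⁻¹ * (Lmat J ε₀ a)⁻¹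
          - (Lmat J ε₀ a)⁻¹ * (Lmat J ε₀ a)⁻¹) := by
    module
  rw [h4, h3, smul_smul]
  congr 1
  ring

def a0 {n : ℕ} (J : Matrix (Fin n) (Fin n) ℂ) (σ : ℝ) : ℝ :=
  max 1 (2 / σ * (1 + 2 * σ * nu J))

def A2c {n : ℕ} (J : Matrix (Fin n) (Fin n) ℂ) (σ C : ℝ) : ℝ :=
  max ((a0 J σ) ^ 2 * (C / σ)) (2 / σ)

def Kbc {n : ℕ} (J : Matrix (Fin n) (Fin n) ℂ) (σ C : ℝ) : ℝ :=
  max (C / σ) (A2c J σ C)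

lemma a0_pos {n : ℕ} (J : Matrix (Fin n) (Fin n) ℂ) (σ : ℝ) : 0 < a0 J σ :=
  lt_of_lt_of_le one_pos (le_max_left _ _)

lemma A2c_nonneg {n : ℕ} (J : Matrix (Fin n) (Fin n) ℂ) {σ C : ℝ} (hσ : 0 < σ) (hC : 0 < C) :
    0 ≤ A2c J σ C := le_trans (by positivity) (le_max_right _ _)

lemma Kbc_nonneg {n : ℕ} (J : Matrix (Fin n) (Fin n) ℂ) {σ C : ℝ} (hσ : 0 < σ) (hC : 0 < C) :
    0 ≤ Kbc J σ C := le_trans (by positivity) (le_max_left _ _)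

lemma norm_in_cone {σ μ : ℝ} {ε : ℂ} (hε : ε ∈ ConeDom σ μ) : σ ≤ ‖ε‖ ∧ ‖ε‖ ≤ 2 * σ := by
  obtain ⟨-, h1, h2⟩ := hε
  exact ⟨h1, h2⟩

lemma nu_inv_large {n : ℕ} (J : Matrix (Fin n) (Fin n) ℂ) {σ μ : ℝ} (hσ : 0 < σ)
    {ε : ℂ} (hε : ε ∈ ConeDom σ μ) {a : ℝ} (hL : IsUnit (Lmat J ε a).det)
    (ha : a0 J σ ≤ |a|) : nu (Lmat J ε a)⁻¹ ≤ 2 / (σ * a ^ 2) := by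
  obtain ⟨hεl, hεu⟩ := norm_in_cone hε
  have hεne : ε ≠ 0 := by
    intro h
    rw [h, norm_zero] at hεl
    linarith
  have ha1 : 1 ≤ |a| := le_trans (le_max_left _ _) ha
  have hane : a ≠ 0 := by
    intro h; rw [h, abs_zero] at ha1; linarith
  have ha2 : (1 : ℝ) ≤ a ^ 2 := by rw [← _root_.sq_abs]; nlinarith [abs_nonneg a]
  have hu : (-ε * (a : ℂ) ^ 2 : ℂ) ≠ 0 := by
    apply mul_ne_zero (neg_ne_zero.mpr hεne)
    exact pow_ne_zero _ (by exact_mod_cast hane)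
  have hnu : ‖(-ε * (a : ℂ) ^ 2 : ℂ)‖ = ‖ε‖ * a ^ 2 := by
    rw [norm_mul, norm_neg, norm_pow, Complex.norm_real, Real.norm_eq_abs, _root_.sq_abs]
  set P : Matrix (Fin n) (Fin n) ℂ :=
    (-(-ε * (a : ℂ) ^ 2)⁻¹) • ((Complex.I * a) • (1 : Matrix (Fin n) (Fin n) ℂ) + ε • J)
    with hPdef
  have huP : (-ε * (a : ℂ) ^ 2) • P
      = -((Complex.I * a) • (1 : Matrix (Fin n) (Fin n) ℂ) + ε • J) := by
    rw [hPdef, smul_smul, mul_neg, mul_inv_cancel₀ hu, neg_one_smul]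
  have hd : Lmat J ε a = (-ε * (a : ℂ) ^ 2) • ((1 : Matrix (Fin n) (Fin n) ℂ) - P) := by
    rw [smul_sub, huP, sub_neg_eq_add, Lmat]
    module
  have hP : nu P ≤ 1 / 2 := by
    have h1 : nu P ≤ ‖(-ε * (a : ℂ) ^ 2 : ℂ)‖⁻¹ * (|a| + 2 * σ * nu J) := by
      rw [hPdef, nu_smul, norm_neg, norm_inv]
      apply mul_le_mul_of_nonneg_left _ (inv_nonneg.mpr (norm_nonneg _))
      have e1 : nu ((Complex.I * a) • (1 : Matrix (Fin n) (Fin n) ℂ)) ≤ |a| := by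
        rw [nu_smul, norm_mul, Complex.norm_I, one_mul, Complex.norm_real, Real.norm_eq_abs]
        calc |a| * nu (1 : Matrix (Fin n) (Fin n) ℂ) ≤ |a| * 1 :=
              mul_le_mul_of_nonneg_left nu_one_le (abs_nonneg a)
          _ = |a| := mul_one _
      have e2 : nu (ε • J) ≤ 2 * σ * nu J := by
        rw [nu_smul]
        exact mul_le_mul_of_nonneg_right hεu (nu_nonneg J)
      calc nu ((Complex.I * a) • (1 : Matrix (Fin n) (Fin n) ℂ) + ε • J)
          ≤ nu ((Complex.I * a) • (1 : Matrix (Fin n) (Fin n) ℂ)) + nu (ε • J) :=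
            nu_add_le _ _
        _ ≤ |a| + 2 * σ * nu J := add_le_add e1 e2
    have h2 : ‖(-ε * (a : ℂ) ^ 2 : ℂ)‖⁻¹ ≤ (σ * a ^ 2)⁻¹ := by
      rw [hnu]
      apply inv_anti₀ (by positivity)
      exact mul_le_mul_of_nonneg_right hεl (by positivity)
    have h3 : (σ * a ^ 2)⁻¹ * (|a| + 2 * σ * nu J) ≤ 1 / 2 := by
      rw [inv_mul_le_iff₀ (by positivity)]
      have hJ0 := nu_nonneg J
      have haa : 2 / σ * (1 + 2 * σ * nu J) ≤ |a| := le_trans (le_max_right _ _) ha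
      have hsq : |a| ^ 2 = a ^ 2 := _root_.sq_abs a
      have h5 : 2 * (1 + 2 * σ * nu J) ≤ σ * |a| := by
        have h6 := mul_le_mul_of_nonneg_left haa hσ.le
        rw [show σ * (2 / σ * (1 + 2 * σ * nu J)) = 2 * (1 + 2 * σ * nu J) by
          field_simp] at h6
        exact h6
      nlinarith [mul_le_mul_of_nonneg_left h5 (abs_nonneg a),
        mul_nonneg (mul_nonneg (sub_nonneg.mpr ha1) hσ.le) hJ0]
    calc nu P ≤ ‖(-ε * (a : ℂ) ^ 2 : ℂ)‖⁻¹ * (|a| + 2 * σ * nu J) := h1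
      _ ≤ (σ * a ^ 2)⁻¹ * (|a| + 2 * σ * nu J) := by
          apply mul_le_mul_of_nonneg_right h2
          have := nu_nonneg J
          positivity
      _ ≤ 1 / 2 := h3
  have := nu_inv_le_of_decomp hu hL hd hP
  calc nu (Lmat J ε a)⁻¹ ≤ 2 / ‖(-ε * (a : ℂ) ^ 2 : ℂ)‖ := this
    _ ≤ 2 / (σ * a ^ 2) := by
        rw [hnu]
        have hpos : 0 < σ * a ^ 2 := mul_pos hσ (lt_of_lt_of_le one_pos ha2)
        have h7 : σ * a ^ 2 ≤ ‖ε‖ * a ^ 2 := mul_le_mul_of_nonneg_right hεl (by positivity)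
        exact div_le_div_of_nonneg_left (by norm_num) hpos h7

lemma a2_nu_inv {n : ℕ} (J : Matrix (Fin n) (Fin n) ℂ) {σ μ C : ℝ} (hσ : 0 < σ) (hC : 0 < C)
    (hinv : ∀ ε ∈ ConeDom σ μ, ∀ a : ℝ, IsUnit (Lmat J ε a).det ∧
      ‖Matrix.toEuclideanCLM (𝕜 := ℂ) ((Lmat J ε a)⁻¹)‖ ≤ C / σ)
    {ε : ℂ} (hε : ε ∈ ConeDom σ μ) (a : ℝ) :
    a ^ 2 * nu (Lmat J ε a)⁻¹ ≤ A2c J σ C := by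
  by_cases h : |a| ≤ a0 J σ
  · refine le_trans ?_ (le_max_left _ _)
    have h1 : a ^ 2 ≤ (a0 J σ) ^ 2 := by
      rw [← _root_.sq_abs]
      exact pow_le_pow_left₀ (abs_nonneg a) h 2
    have h2 : nu (Lmat J ε a)⁻¹ ≤ C / σ := (hinv ε hε a).2
    exact mul_le_mul h1 h2 (nu_nonneg _) (by positivity)
  · push_neg at h
    refine le_trans ?_ (le_max_right _ _)
    have hb := nu_inv_large J hσ hε (hinv ε hε a).1 h.le
    have ha2 : 0 < a ^ 2 := by
      have := a0_pos J σ
      rw [← _root_.sq_abs]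
      nlinarith
    calc a ^ 2 * nu (Lmat J ε a)⁻¹ ≤ a ^ 2 * (2 / (σ * a ^ 2)) :=
          mul_le_mul_of_nonneg_left hb (by positivity)
      _ = 2 / σ := by rw [← mul_div_assoc, div_eq_div_iff (mul_pos hσ ha2).ne' hσ.ne']; ring

lemma abs_nu_inv {n : ℕ} (J : Matrix (Fin n) (Fin n) ℂ) {σ μ C : ℝ} (hσ : 0 < σ) (hC : 0 < C)
    (hinv : ∀ ε ∈ ConeDom σ μ, ∀ a : ℝ, IsUnit (Lmat J ε a).det ∧
      ‖Matrix.toEuclideanCLM (𝕜 := ℂ) ((Lmat J ε a)⁻¹)‖ ≤ C / σ)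
    {ε : ℂ} (hε : ε ∈ ConeDom σ μ) (a : ℝ) :
    |a| * nu (Lmat J ε a)⁻¹ ≤ Kbc J σ C := by
  by_cases h : |a| ≤ 1
  · refine le_trans ?_ (le_max_left _ _)
    have h2 : nu (Lmat J ε a)⁻¹ ≤ C / σ := (hinv ε hε a).2
    calc |a| * nu (Lmat J ε a)⁻¹ ≤ 1 * (C / σ) :=
          mul_le_mul h h2 (nu_nonneg _) zero_le_one
      _ = C / σ := one_mul _
  · push_neg at h
    refine le_trans ?_ (le_max_right _ _)
    have h1 : |a| ≤ a ^ 2 := by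
      rw [← _root_.sq_abs]
      nlinarith [abs_nonneg a]
    calc |a| * nu (Lmat J ε a)⁻¹ ≤ a ^ 2 * nu (Lmat J ε a)⁻¹ :=
          mul_le_mul_of_nonneg_right h1 (nu_nonneg _)
      _ ≤ A2c J σ C := a2_nu_inv J hσ hC hinv hε a

/-- the uniform second-order remainder constant -/
def CstR {n : ℕ} (J : Matrix (Fin n) (Fin n) ℂ) (σ C : ℝ) : ℝ :=
  A2c J σ C * (Kbc J σ C * (C / σ)) + nu J * (Kbc J σ C * (C / σ) ^ 2)

lemma CstR_nonneg {n : ℕ} (J : Matrix (Fin n) (Fin n) ℂ) {σ C : ℝ} (hσ : 0 < σ) (hC : 0 < C) :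
    0 ≤ CstR J σ C := by
  have h1 := A2c_nonneg J hσ hC
  have h2 := Kbc_nonneg J hσ hC
  have h3 := nu_nonneg J
  have h4 : (0:ℝ) ≤ C / σ := by positivity
  unfold CstR
  positivity

lemma rem_bound {n : ℕ} (J : Matrix (Fin n) (Fin n) ℂ) {σ μ C : ℝ} (hσ : 0 < σ) (hC : 0 < C)
    (hinv : ∀ ε ∈ ConeDom σ μ, ∀ a : ℝ, IsUnit (Lmat J ε a).det ∧
      ‖Matrix.toEuclideanCLM (𝕜 := ℂ) ((Lmat J ε a)⁻¹)‖ ≤ C / σ)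
    {ε ε₀ : ℂ} (hε : ε ∈ ConeDom σ μ) (hε₀ : ε₀ ∈ ConeDom σ μ) (a : ℝ) :
    nu (ε • (Lmat J ε a)⁻¹ - ε₀ • (Lmat J ε₀ a)⁻¹
        - (ε - ε₀) • ((Complex.I * a) • ((Lmat J ε₀ a)⁻¹ * (Lmat J ε₀ a)⁻¹)))
      ≤ CstR J σ C * ‖ε - ε₀‖ ^ 2 := by
  set X := (Lmat J ε a)⁻¹ with hXdef
  set Y := (Lmat J ε₀ a)⁻¹ with hYdef
  rw [rem_eq J ε ε₀ a (hinv ε hε a).1 (hinv ε₀ hε₀ a).1, nu_smul]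
  have hnorm : ‖Complex.I * a * (ε - ε₀) ^ 2‖ = |a| * ‖ε - ε₀‖ ^ 2 := by
    rw [norm_mul, norm_mul, Complex.norm_I, one_mul, Complex.norm_real, Real.norm_eq_abs,
      norm_pow]
  rw [hnorm]
  -- structural bound on the matrix product
  have hXC : nu X ≤ C / σ := (hinv ε hε a).2
  have hYC : nu Y ≤ C / σ := (hinv ε₀ hε₀ a).2
  have hXA : a ^ 2 * nu X ≤ A2c J σ C := a2_nu_inv J hσ hC hinv hε a
  have hXK : |a| * nu X ≤ Kbc J σ C := abs_nu_inv J hσ hC hinv hε a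
  have hYK : |a| * nu Y ≤ Kbc J σ C := abs_nu_inv J hσ hC hinv hε₀ a
  have hsplit : nu (X * (((a : ℂ) ^ 2) • 1 - J) * Y * Y)
      ≤ (a ^ 2 * nu X + nu X * nu J) * (nu Y * nu Y) := by
    have e0 : X * (((a : ℂ) ^ 2) • 1 - J) = ((a : ℂ) ^ 2) • X - X * J := by
      rw [Matrix.mul_sub, Matrix.mul_smul, Matrix.mul_one]
    have e1 : nu (X * (((a : ℂ) ^ 2) • 1 - J)) ≤ a ^ 2 * nu X + nu X * nu J := by
      rw [e0]
      calc nu (((a : ℂ) ^ 2) • X - X * J) ≤ nu (((a : ℂ) ^ 2) • X) + nu (X * J) :=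
            nu_sub_le _ _
        _ ≤ a ^ 2 * nu X + nu X * nu J := by
            rw [nu_smul]
            apply add_le_add _ (nu_mul_le _ _)
            rw [norm_pow, Complex.norm_real, Real.norm_eq_abs, _root_.sq_abs]
    calc nu (X * (((a : ℂ) ^ 2) • 1 - J) * Y * Y)
        ≤ nu (X * (((a : ℂ) ^ 2) • 1 - J) * Y) * nu Y := nu_mul_le _ _
      _ ≤ nu (X * (((a : ℂ) ^ 2) • 1 - J)) * nu Y * nu Y := by
          apply mul_le_mul_of_nonneg_right (nu_mul_le _ _) (nu_nonneg _)
      _ ≤ (a ^ 2 * nu X + nu X * nu J) * (nu Y * nu Y) := by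
          rw [← mul_assoc]
          apply mul_le_mul_of_nonneg_right _ (nu_nonneg _)
          exact mul_le_mul_of_nonneg_right e1 (nu_nonneg _)
  -- combine
  have hfinal : |a| * ((a ^ 2 * nu X + nu X * nu J) * (nu Y * nu Y)) ≤ CstR J σ C := by
    have expand : |a| * ((a ^ 2 * nu X + nu X * nu J) * (nu Y * nu Y))
        = (a ^ 2 * nu X) * ((|a| * nu Y) * nu Y) + nu J * ((|a| * nu X) * (nu Y * nu Y)) := by
      ring
    rw [expand, CstR]
    apply add_le_add
    · apply mul_le_mul hXA _ (by have h9 := nu_nonneg Y; have h8 := abs_nonneg a; positivity) (A2c_nonneg J hσ hC)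
      apply mul_le_mul hYK hYC (nu_nonneg _) (Kbc_nonneg J hσ hC)
    · apply mul_le_mul_of_nonneg_left _ (nu_nonneg J)
      calc (|a| * nu X) * (nu Y * nu Y) ≤ Kbc J σ C * (nu Y * nu Y) :=
            mul_le_mul_of_nonneg_right hXK
              (mul_nonneg (nu_nonneg Y) (nu_nonneg Y))
        _ ≤ Kbc J σ C * ((C / σ) * (C / σ)) := by
            apply mul_le_mul_of_nonneg_left _ (Kbc_nonneg J hσ hC)
            exact mul_le_mul hYC hYC (nu_nonneg _) (le_of_lt (by positivity))
        _ = Kbc J σ C * (C / σ) ^ 2 := by ring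
  calc |a| * ‖ε - ε₀‖ ^ 2 * nu (X * (((a : ℂ) ^ 2) • 1 - J) * Y * Y)
      ≤ |a| * ‖ε - ε₀‖ ^ 2 * ((a ^ 2 * nu X + nu X * nu J) * (nu Y * nu Y)) := by
        apply mul_le_mul_of_nonneg_left hsplit (by positivity)
    _ = (|a| * ((a ^ 2 * nu X + nu X * nu J) * (nu Y * nu Y))) * ‖ε - ε₀‖ ^ 2 := by ring
    _ ≤ CstR J σ C * ‖ε - ε₀‖ ^ 2 := by
        apply mul_le_mul_of_nonneg_right hfinal (by positivity)



section Ops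

variable {d n : ℕ}

/-- the operator family `ε ↦ ε𝓛_ε⁻¹` -/
def Aop (J : Matrix (Fin n) (Fin n) ℂ) (ω : Fin d → ℝ) (ε : ℂ) : Xsp d n →L[ℂ] Xsp d n :=
  mulLp' (fun k => Matrix.toEuclideanCLM (𝕜 := ℂ) (ε • (Lmat J ε (odot ω k))⁻¹))

/-- its derivative -/
def Bop (J : Matrix (Fin n) (Fin n) ℂ) (ω : Fin d → ℝ) (ε₀ : ℂ) : Xsp d n →L[ℂ] Xsp d n :=
  mulLp' (fun k => Matrix.toEuclideanCLM (𝕜 := ℂ)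
    ((Complex.I * (odot ω k : ℝ)) • ((Lmat J ε₀ (odot ω k))⁻¹ * (Lmat J ε₀ (odot ω k))⁻¹)))

variable {J : Matrix (Fin n) (Fin n) ℂ} {ω : Fin d → ℝ} {σ μ C : ℝ}

lemma Abound (hσ : 0 < σ) (hC : 0 < C)
    (hinv : ∀ ε ∈ ConeDom σ μ, ∀ a : ℝ, IsUnit (Lmat J ε a).det ∧
      ‖Matrix.toEuclideanCLM (𝕜 := ℂ) ((Lmat J ε a)⁻¹)‖ ≤ C / σ)
    {ε : ℂ} (hε : ε ∈ ConeDom σ μ) (k : Fin d → ℤ) :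
    ‖Matrix.toEuclideanCLM (𝕜 := ℂ) (ε • (Lmat J ε (odot ω k))⁻¹)‖ ≤ 2 * σ * (C / σ) := by
  have h : nu (ε • (Lmat J ε (odot ω k))⁻¹) ≤ 2 * σ * (C / σ) := by
    rw [nu_smul]
    exact mul_le_mul (norm_in_cone hε).2 (hinv ε hε (odot ω k)).2 (nu_nonneg _)
      (by positivity)
  exact h

lemma Bbound (hσ : 0 < σ) (hC : 0 < C)
    (hinv : ∀ ε ∈ ConeDom σ μ, ∀ a : ℝ, IsUnit (Lmat J ε a).det ∧
      ‖Matrix.toEuclideanCLM (𝕜 := ℂ) ((Lmat J ε a)⁻¹)‖ ≤ C / σ)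
    {ε₀ : ℂ} (hε₀ : ε₀ ∈ ConeDom σ μ) (k : Fin d → ℤ) :
    ‖Matrix.toEuclideanCLM (𝕜 := ℂ)
        ((Complex.I * (odot ω k : ℝ)) • ((Lmat J ε₀ (odot ω k))⁻¹ * (Lmat J ε₀ (odot ω k))⁻¹))‖
      ≤ Kbc J σ C * (C / σ) := by
  set a := odot ω k
  set Y := (Lmat J ε₀ a)⁻¹
  have h : nu ((Complex.I * (a : ℝ)) • (Y * Y)) ≤ Kbc J σ C * (C / σ) := by
    rw [nu_smul, norm_mul, Complex.norm_I, one_mul, Complex.norm_real, Real.norm_eq_abs]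
    calc |a| * nu (Y * Y) ≤ |a| * (nu Y * nu Y) :=
          mul_le_mul_of_nonneg_left (nu_mul_le _ _) (abs_nonneg a)
      _ = (|a| * nu Y) * nu Y := by ring
      _ ≤ Kbc J σ C * (C / σ) :=
          mul_le_mul (abs_nu_inv J hσ hC hinv hε₀ a) (hinv ε₀ hε₀ a).2 (nu_nonneg _)
            (Kbc_nonneg J hσ hC)
  exact h

lemma Aop_apply (hσ : 0 < σ) (hC : 0 < C)
    (hinv : ∀ ε ∈ ConeDom σ μ, ∀ a : ℝ, IsUnit (Lmat J ε a).det ∧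
      ‖Matrix.toEuclideanCLM (𝕜 := ℂ) ((Lmat J ε a)⁻¹)‖ ≤ C / σ)
    {ε : ℂ} (hε : ε ∈ ConeDom σ μ) (f : Xsp d n) (k : Fin d → ℤ) :
    (Aop J ω ε f : ∀ _, Ecs n) k
      = Matrix.toEuclideanCLM (𝕜 := ℂ) (ε • (Lmat J ε (odot ω k))⁻¹) ((f : ∀ _, Ecs n) k) :=
  mulLp'_apply _ (by positivity) (fun k => Abound hσ hC hinv hε k) f k

lemma Bop_apply (hσ : 0 < σ) (hC : 0 < C)
    (hinv : ∀ ε ∈ ConeDom σ μ, ∀ a : ℝ, IsUnit (Lmat J ε a).det ∧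
      ‖Matrix.toEuclideanCLM (𝕜 := ℂ) ((Lmat J ε a)⁻¹)‖ ≤ C / σ)
    {ε₀ : ℂ} (hε₀ : ε₀ ∈ ConeDom σ μ) (f : Xsp d n) (k : Fin d → ℤ) :
    (Bop J ω ε₀ f : ∀ _, Ecs n) k
      = Matrix.toEuclideanCLM (𝕜 := ℂ)
          ((Complex.I * (odot ω k : ℝ)) •
            ((Lmat J ε₀ (odot ω k))⁻¹ * (Lmat J ε₀ (odot ω k))⁻¹)) ((f : ∀ _, Ecs n) k) :=
  mulLp'_apply _ (mul_nonneg (Kbc_nonneg J hσ hC) (by positivity))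
    (fun k => Bbound hσ hC hinv hε₀ k) f k

lemma diff_op_bound (hσ : 0 < σ) (hC : 0 < C)
    (hinv : ∀ ε ∈ ConeDom σ μ, ∀ a : ℝ, IsUnit (Lmat J ε a).det ∧
      ‖Matrix.toEuclideanCLM (𝕜 := ℂ) ((Lmat J ε a)⁻¹)‖ ≤ C / σ)
    {ε ε₀ : ℂ} (hε : ε ∈ ConeDom σ μ) (hε₀ : ε₀ ∈ ConeDom σ μ) :
    ‖Aop (d := d) J ω ε - Aop J ω ε₀ - (ε - ε₀) • Bop J ω ε₀‖
      ≤ CstR J σ C * ‖ε - ε₀‖ ^ 2 := by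
  apply ContinuousLinearMap.opNorm_le_bound _
    (mul_nonneg (CstR_nonneg J hσ hC) (by positivity))
  intro f
  apply lp2_norm_le (mul_nonneg (CstR_nonneg J hσ hC) (by positivity))
  intro k
  have hco : ((Aop (d := d) J ω ε - Aop J ω ε₀ - (ε - ε₀) • Bop J ω ε₀) f : ∀ _, Ecs n) k
      = (Aop J ω ε f : ∀ _, Ecs n) k - (Aop J ω ε₀ f : ∀ _, Ecs n) k
        - (ε - ε₀) • (Bop J ω ε₀ f : ∀ _, Ecs n) k := by
    simp [ContinuousLinearMap.sub_apply, ContinuousLinearMap.smul_apply]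
    rfl
  rw [hco, Aop_apply hσ hC hinv hε f k, Aop_apply hσ hC hinv hε₀ f k,
    Bop_apply hσ hC hinv hε₀ f k]
  set a := odot ω k
  have hφ : Matrix.toEuclideanCLM (𝕜 := ℂ) (ε • (Lmat J ε a)⁻¹) ((f : ∀ _, Ecs n) k)
      - Matrix.toEuclideanCLM (𝕜 := ℂ) (ε₀ • (Lmat J ε₀ a)⁻¹) ((f : ∀ _, Ecs n) k)
      - (ε - ε₀) • Matrix.toEuclideanCLM (𝕜 := ℂ)
          ((Complex.I * (a : ℝ)) • ((Lmat J ε₀ a)⁻¹ * (Lmat J ε₀ a)⁻¹)) ((f : ∀ _, Ecs n) k)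
      = Matrix.toEuclideanCLM (𝕜 := ℂ)
          (ε • (Lmat J ε a)⁻¹ - ε₀ • (Lmat J ε₀ a)⁻¹
            - (ε - ε₀) • ((Complex.I * (a : ℝ)) •
                ((Lmat J ε₀ a)⁻¹ * (Lmat J ε₀ a)⁻¹))) ((f : ∀ _, Ecs n) k) := by
    rw [map_sub, map_sub, _root_.map_smul]
    simp [ContinuousLinearMap.sub_apply, ContinuousLinearMap.smul_apply]
  rw [hφ]
  calc ‖Matrix.toEuclideanCLM (𝕜 := ℂ)
          (ε • (Lmat J ε a)⁻¹ - ε₀ • (Lmat J ε₀ a)⁻¹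
            - (ε - ε₀) • ((Complex.I * (a : ℝ)) •
                ((Lmat J ε₀ a)⁻¹ * (Lmat J ε₀ a)⁻¹))) ((f : ∀ _, Ecs n) k)‖
      ≤ nu (ε • (Lmat J ε a)⁻¹ - ε₀ • (Lmat J ε₀ a)⁻¹
            - (ε - ε₀) • ((Complex.I * (a : ℝ)) •
                ((Lmat J ε₀ a)⁻¹ * (Lmat J ε₀ a)⁻¹))) * ‖(f : ∀ _, Ecs n) k‖ :=
        ContinuousLinearMap.le_opNorm _ _
    _ ≤ CstR J σ C * ‖ε - ε₀‖ ^ 2 * ‖(f : ∀ _, Ecs n) k‖ :=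
        mul_le_mul_of_nonneg_right (rem_bound J hσ hC hinv hε hε₀ a) (norm_nonneg _)

end Ops


lemma clm_mulVec {n : ℕ} (M : Matrix (Fin n) (Fin n) ℂ) (x : Ecs n) :
    Matrix.toEuclideanCLM (𝕜 := ℂ) M x = (WithLp.toLp 2 (M.mulVec x) : Ecs n) := by
  rfl

/-- if `ε ↦ V_ε` is a bounded complex-differentiable map from the interior
of `Ω(σ,μ)` to `H^{ρ,m}(𝕋^d, ℂⁿ)` (here represented by its weighted coefficient map `G`
into the model space `Xsp`), and `L_ε(a)` is invertible with `‖L_ε(a)⁻¹‖ ≤ C/σ` on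
`Ω(σ,μ)`, then `ε ↦ ε𝓛_ε⁻¹V_ε` is complex differentiable from the interior of `Ω(σ,μ)`
to `H^{ρ,m}`. -/
theorem stmt15 (d n : ℕ) (hd : 1 ≤ d) (hn : 1 ≤ n) (ω : Fin d → ℝ)
    (ρ m : ℝ) (hρ : 0 < ρ) (hm : (d : ℝ) + 2 < m)
    (J : Matrix (Fin n) (Fin n) ℂ) (hJ : IsJordanForm J)
    (hdiag : ∀ i, (J i i).im = 0 ∧ J i i ≠ 0)
    (μ σ : ℝ) (hμ : 0 < μ) (hσ : 0 < σ) (C : ℝ) (hC : 0 < C)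
    (hinv : ∀ ε ∈ ConeDom σ μ, ∀ a : ℝ, IsUnit (Lmat J ε a).det ∧
      ‖Matrix.toEuclideanCLM (𝕜 := ℂ) ((Lmat J ε a)⁻¹)‖ ≤ C / σ)
    (G : ℂ → Xsp d n) (hGb : ∃ M : ℝ, ∀ ε ∈ ConeDom σ μ, ‖G ε‖ ≤ M)
    (hGd : DifferentiableOn ℂ G (interior (ConeDom σ μ))) :
    ∃ H : ℂ → Xsp d n,
      (∀ ε ∈ ConeDom σ μ, ∀ k : Fin d → ℤ,
        (H ε : ∀ _ : Fin d → ℤ, Ecs n) k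
          = (WithLp.toLp 2 (ε • Matrix.mulVec (Lmat J ε (odot ω k))⁻¹
              ((G ε : ∀ _ : Fin d → ℤ, Ecs n) k)) : Ecs n)) ∧
      DifferentiableOn ℂ H (interior (ConeDom σ μ)) := by
  refine ⟨fun ε => Aop J ω ε (G ε), ?_, ?_⟩
  · intro ε hε k
    rw [show ((fun ε => Aop J ω ε (G ε)) ε : Xsp d n) = Aop J ω ε (G ε) from rfl,
      Aop_apply hσ hC hinv hε (G ε) k, _root_.map_smul, ContinuousLinearMap.smul_apply,
      clm_mulVec, WithLp.toLp_smul]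
  · intro ε₀ hε₀
    have hε₀C : ε₀ ∈ ConeDom σ μ := interior_subset hε₀
    have hGat : DifferentiableAt ℂ G ε₀ :=
      (hGd ε₀ hε₀).differentiableAt (isOpen_interior.mem_nhds hε₀)
    have hA : HasDerivAt (Aop J ω (d := d) (n := n)) (Bop J ω ε₀) ε₀ := by
      rw [hasDerivAt_iff_isLittleO, Asymptotics.isLittleO_iff]
      intro c hc
      have hK : 0 < CstR J σ C + 1 := by linarith [CstR_nonneg J hσ hC]
      have h1 : ∀ᶠ ε in nhds ε₀, ε ∈ ConeDom σ μ :=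
        Filter.eventually_of_mem (isOpen_interior.mem_nhds hε₀)
          (fun ε h => interior_subset h)
      have h2 : ∀ᶠ ε in nhds ε₀, ‖ε - ε₀‖ ≤ c / (CstR J σ C + 1) := by
        have hb := Metric.closedBall_mem_nhds ε₀ (div_pos hc hK)
        exact Filter.eventually_of_mem hb (fun ε h => by
          rw [Metric.mem_closedBall, dist_eq_norm] at h; exact h)
      filter_upwards [h1, h2] with ε hεC hεb
      have hx : (0:ℝ) ≤ ‖ε - ε₀‖ := norm_nonneg _
      have h0 := CstR_nonneg J hσ hC
      have h3 : CstR J σ C * ‖ε - ε₀‖ ≤ c := by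
        calc CstR J σ C * ‖ε - ε₀‖ ≤ (CstR J σ C + 1) * (c / (CstR J σ C + 1)) :=
              mul_le_mul (by linarith) hεb hx (by linarith)
          _ = c := by field_simp
      have hb1 : CstR J σ C * ‖ε - ε₀‖ ^ 2 ≤ c * ‖ε - ε₀‖ := by
        calc CstR J σ C * ‖ε - ε₀‖ ^ 2 = (CstR J σ C * ‖ε - ε₀‖) * ‖ε - ε₀‖ := by ring
          _ ≤ c * ‖ε - ε₀‖ := mul_le_mul_of_nonneg_right h3 hx
      exact le_trans (diff_op_bound hσ hC hinv hεC hε₀C) hb1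
    exact ((hA.differentiableAt).clm_apply hGat).differentiableWithinAt

end
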